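/- For any word γ in {NE,D}^n, the sum over the paths γ_i in the sequence φ(γ) of q^{bounce(γ_i)} t^{area(γ_i)} equals the Schur polynomial s_{(bounce(γ))}(q,t) = q^b + q^{b-1}t + ... + t^b where b = bounce(γ). -/

import Mathlib

open scoped Classical

inductive Step : Type
  | N | E | D
deriving DecidableEq, Repr

instance : Fintype Step :=
  ⟨{Step.N, Step.E, Step.D}, by intro x; cases x <;> simp⟩

open Step

/-- number of occurrences of the letter `s` in the word `w` -/
def cnt (s : Step) (w : List Step) : ℕ := w.count s

/-- Schröder (or Dyck, if no `D`s) path in an `n × n` grid: every prefix has at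
least as many `N`s as `E`s, and the totals agree. -/
def IsSchroeder (w : List Step) : Prop :=
  (∀ p : List Step, p <+: w → cnt E p ≤ cnt N p) ∧ cnt N w = cnt E w

/-- words that are concatenations of blocks `NE` and `D` -/
inductive IsNED : List Step → Prop
  | nil : IsNED []
  | ne {w} : IsNED w → IsNED (N :: E :: w)
  | d {w} : IsNED w → IsNED (D :: w)

/-- area of a Schröder path: the number of lower triangles between the path and the
main diagonal, computed as the sum over `N` and `D` steps of the height
`#N - #E` of the starting point of the step above the diagonal. -/
def areaAux : ℕ → List Step → ℕ
  | _, [] => 0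
  | h, N :: w => h + areaAux (h+1) w
  | h, D :: w => h + areaAux h w
  | h, E :: w => areaAux (h-1) w

def area (w : List Step) : ℕ := areaAux 0 w

/-- area of an `N/E` lattice path in a rectangular grid: the number of boxes under
the path, i.e. the sum over `E` steps of the number of `N` steps before it. -/
def areaNEAux : ℕ → List Step → ℕ
  | _, [] => 0
  | h, N :: w => areaNEAux (h+1) w
  | h, E :: w => h + areaNEAux h w
  | h, D :: w => areaNEAux h w

def areaNE (w : List Step) : ℕ := areaNEAux 0 w

/-- number of `N`s occurring before the `(j+1)`-st `E` (`j` is 0-indexed);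
this is the height of the path above the horizontal interval `[j, j+1]`. -/
def nBefore : List Step → ℕ → ℕ
  | [], _ => 0
  | N :: w, j => 1 + nBefore w j
  | E :: w, j => if j = 0 then 0 else nBefore w (j-1)
  | D :: w, j => nBefore w j

/-- number of `E`s occurring before the `(i+1)`-st `N` (`i` is 0-indexed). -/
def eBefore : List Step → ℕ → ℕ
  | [], _ => 0
  | E :: w, i => 1 + eBefore w i
  | N :: w, i => if i = 0 then 0 else eBefore w (i-1)
  | D :: w, i => eBefore w i

/-- number of `D`s occurring after the `e`-th `E` (`e` is 1-indexed). -/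
def dAfterE : List Step → ℕ → ℕ
  | [], _ => 0
  | E :: w, e => if e ≤ 1 then cnt D w else dAfterE w (e-1)
  | D :: w, e => dAfterE w e
  | N :: w, e => dAfterE w e

/-- Combined computation of `bounce(Γ(γ)) + numph(γ)` along the bounce path of
`Γ(γ)`.  Here `g` is the Schröder path, `w = Γ(g)` is the underlying Dyck path,
`nn` its size; the bounce path has corners (peaks) at the positions
`j₀ = 0, jₖ₊₁ = nBefore w jₖ`; each intermediate return `jₖ₊₁ < nn` contributes
`nn - jₖ₊₁` to the bounce of `Γ(g)`, and the peak with corner at `jₖ` is the start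
of the `(jₖ+1)`-st east step, contributing to numph the number of diagonal steps of
`g` above it, i.e. after that east step. -/
def bounceAux (g w : List Step) (nn : ℕ) : ℕ → ℕ → ℕ
  | 0, _ => 0
  | fuel+1, j =>
      dAfterE g (j+1) +
        (if nn ≤ nBefore w j ∨ nBefore w j ≤ j then 0
         else (nn - nBefore w j) + bounceAux g w nn fuel (nBefore w j))

/-- the bounce statistic of a Schröder path: `bounce(Γ(γ)) + numph(γ)` -/
def bounce (g : List Step) : ℕ :=
  let w := g.filter (fun s => s ≠ D)
  let nn := cnt E w
  if nn = 0 then 0 else bounceAux g w nn g.length 0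

/-- the (signed) area coordinate `a_i = m·i - (#E before the (i+1)-st N)` of line `i`
(0-indexed) for a path in an `n × mn` grid. -/
def aLine (m : ℕ) (g : List Step) (i : ℕ) : ℤ := (m : ℤ) * i - eBefore g i

/-- an `(n, mn)`-Dyck path: `n` north steps, `mn` east steps, no diagonal steps,
staying weakly above the main diagonal. -/
def IsParkingPath (n m : ℕ) (g : List Step) : Prop :=
  (∀ s ∈ g, s ≠ D) ∧ cnt N g = n ∧ cnt E g = m * n ∧
    ∀ p : List Step, p <+: g → cnt E p ≤ m * cnt N p

/-- an `(n, mn)`-parking function: an `(n,mn)`-Dyck path labelled by a permutation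
`w` of `{0, …, n-1}` whose labels increase within each column. -/
def IsParking (n m : ℕ) (g : List Step) (w : Fin n → Fin n) : Prop :=
  IsParkingPath n m g ∧ Function.Bijective w ∧
    ∀ i j : Fin n, (j : ℕ) = (i : ℕ) + 1 → eBefore g (i : ℕ) = eBefore g (j : ℕ) → w i < w j

/-- the diagonal inversion statistic of an `(n, mn)`-parking function -/
def dinv (n m : ℕ) (g : List Step) (w : Fin n → Fin n) : ℤ :=
  ∑ i : Fin n, ∑ j : Fin n,
    if (i : ℕ) < (j : ℕ) then
      (if w i < w j then max 0 ((m : ℤ) - |aLine m g (i : ℕ) - aLine m g (j : ℕ)|) else 0) +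
        (if w j < w i then max 0 ((m : ℤ) - |aLine m g (j : ℕ) - aLine m g (i : ℕ) + 1|) else 0)
    else 0

/-- the number of descents of the word `w` -/
def desNum (n : ℕ) (w : Fin n → Fin n) : ℕ :=
  ((Finset.range (n-1)).filter fun i =>
    ∃ hj : i + 1 < n, w ⟨i+1, hj⟩ < w ⟨i, Nat.lt_of_succ_lt hj⟩).card

/-- the major index of the word `w` (with positions 1-indexed as usual) -/
def majStat (n : ℕ) (w : Fin n → Fin n) : ℕ :=
  ∑ i ∈ (Finset.range (n-1)).filter (fun i =>
    ∃ hj : i + 1 < n, w ⟨i+1, hj⟩ < w ⟨i, Nat.lt_of_succ_lt hj⟩), (i+1)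

/-- the reading word of a labelled path in an `n × mn` grid: labels are read along
diagonals parallel to the main diagonal, starting with the farthest diagonal,
each diagonal being read from top-right to bottom-left. -/
def readWord (n m : ℕ) (g : List Step) (lab : ℕ → ℕ) : List ℕ :=
  ((List.range (m * n + 1)).map fun k =>
    (((List.range n).reverse.filter fun i => aLine m g i = (m * n : ℤ) - k).map lab)).flatten

/-- the labelling function `ℕ → ℕ` associated to a permutation of `Fin n` -/
def labOf {n : ℕ} (w : Fin n → Fin n) : ℕ → ℕ :=
  fun i => if h : i < n then (w ⟨i, h⟩ : ℕ) else 0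

/-- one step of the algorithm `φ`, on the reversed word: find the rightmost
(i.e. first in the reversed word) east step not followed by an east step,
and swap it with the letter following it. -/
def phiRevAux : List Step → List Step
  | a :: E :: t => if a ≠ E then E :: a :: t else a :: phiRevAux (E :: t)
  | a :: t => a :: phiRevAux t
  | [] => []

/-- one step of the algorithm `φ` -/
def phiStep (w : List Step) : List Step := (phiRevAux w.reverse).reverse

/-- the sequence `φ(γ) = (γ₀, γ₁, …, γ_{bounce γ})` produced by the algorithm -/
def phiSeq (g : List Step) : List (List Step) :=
  (List.range (bounce g + 1)).map fun i => phiStep^[i] g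

/-- the union of all sequences `φ(γ)` over area-0 Schröder paths with `n` blocks -/
def phiUniv (n : ℕ) : Set (List Step) :=
  {p | ∃ g, IsNED g ∧ cnt N g + cnt D g = n ∧ p ∈ phiSeq g}

/-- the map replacing each block `NE` by `N` and each `D` by `E` -/
def theta : List Step → List Step
  | N :: E :: w => N :: theta w
  | D :: w => E :: theta w
  | _ :: w => theta w
  | [] => []

/-- the cells of the hook-shaped Young diagram `(d, 1^{n-d})` (row 0 is the arm). -/
def hookCells (n d : ℕ) : Finset (ℕ × ℕ) :=
  ((Finset.range d).image fun c => ((0 : ℕ), c)) ∪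
    ((Finset.range (n - d + 1)).image fun r => (r, (0 : ℕ)))

/-- a standard Young tableau of hook shape `(d, 1^{n-d})`: `pos i` is the cell
`(row, column)` containing the entry `i+1`; entries increase along rows and columns. -/
structure HookSYT (n d : ℕ) where
  pos : Fin n → ℕ × ℕ
  mem : ∀ i, pos i ∈ hookCells n d
  inj : Function.Injective pos
  rowInc : ∀ i j : Fin n, (pos i).1 = (pos j).1 → (pos i).2 < (pos j).2 → i < j
  colInc : ∀ i j : Fin n, (pos i).2 = (pos j).2 → (pos i).1 < (pos j).1 → i < j

/-- the descent set of a standard Young tableau: entries `i ∈ {1, …, n-1}` such that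
the entry `i+1` lies in a strictly higher row than `i`. -/
def Des {n d : ℕ} (τ : HookSYT n d) : Finset ℕ :=
  (Finset.Icc 1 (n-1)).filter fun i =>
    ∃ hi : i < n, ∃ hi' : i - 1 < n, (τ.pos ⟨i - 1, hi'⟩).1 < (τ.pos ⟨i, hi⟩).1

/-- the major index of a standard Young tableau -/
def majT {n d : ℕ} (τ : HookSYT n d) : ℕ := ∑ i ∈ Des τ, i

/-- the number of descents of a standard Young tableau -/
def desT {n d : ℕ} (τ : HookSYT n d) : ℕ := (Des τ).card

/-- the maximum of the descent set -/
def maxDes {n d : ℕ} (τ : HookSYT n d) : ℕ := (Des τ).sup id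

/-- the map `M_{n,d}`: the path `γ₁γ₂⋯γₙ` with `γₙ = NE`, `γ_{n-i} = NE` if
`i ∈ Des τ` and `γ_{n-i} = D` otherwise -/
def Mmap (n d : ℕ) (τ : HookSYT n d) : List Step :=
  (((List.range n).map fun j =>
    if j = n - 1 then [N, E]
    else if (n - 1 - j) ∈ Des τ then [N, E] else [D])).flatten

/-- the map `S_{n,d}`: the path `γ₁⋯γ_{n-1}` with `γ_{n-i} = NNEE` if
`i = max Des τ` and `1 ∈ Des τ`, `γ_{n-i} = NDE` if `i = max Des τ` and
`1 ∉ Des τ`, `γ_{n-i} = NE` if `i = 1` or `i ∈ Des τ ∖ {max Des τ}`, and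
`γ_{n-i} = D` otherwise. -/
def Smap (n d : ℕ) (τ : HookSYT n d) : List Step :=
  (((List.range (n-1)).map fun j =>
    if (n - 1 - j) = maxDes τ then (if 1 ∈ Des τ then [N,N,E,E] else [N,D,E])
    else if (n - 1 - j) = 1 ∨ (n - 1 - j) ∈ Des τ then [N,E] else [D])).flatten

/-- the set `V_{n,d}` of Schröder paths of the form `Dʲ NNEE u` or `Dʲ NDE u`
with `u ∈ {NE,D}* NE`, having `n-d+1` north steps and `d-1` diagonal steps. -/
def Vset (n d : ℕ) : Set (List Step) :=
  {g | (∃ j u, IsNED u ∧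
      (g = List.replicate j D ++ [N,N,E,E] ++ (u ++ [N,E]) ∨
       g = List.replicate j D ++ [N,D,E] ++ (u ++ [N,E]))) ∧
     cnt N g = n - d + 1 ∧ cnt D g = d - 1}

/-- Schröder paths in an `n × n` grid with `dd` diagonal steps, area `a`,
ending with `NE` -/
def SchT (n dd a : ℕ) : Set (List Step) :=
  {g | IsSchroeder g ∧ cnt D g = dd ∧ cnt N g = n - dd ∧ area g = a ∧ ∃ u, g = u ++ [N, E]}

/-- the 'upper' forms: `Dʲ NNEE γ' NE NE` or `γ' NE Dʲ NNEE γ''` -/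
def UpperForm (g : List Step) : Prop :=
  (∃ j u, IsNED u ∧ g = List.replicate j D ++ [N,N,E,E] ++ u ++ [N,E,N,E]) ∨
  (∃ u j v, IsNED u ∧ g = u ++ [N,E] ++ List.replicate j D ++ [N,N,E,E] ++ v)

/-- the 'lower' forms: `Dʲ NNEE γ' D NE` or `γ' NDE Dʲ NE γ''` -/
def LowerForm (g : List Step) : Prop :=
  (∃ j u, IsNED u ∧ g = List.replicate j D ++ [N,N,E,E] ++ u ++ [D,N,E]) ∨
  (∃ u j v, IsNED u ∧ g = u ++ [N,D,E] ++ List.replicate j D ++ [N,E] ++ v)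

/-- the number of distinct columns of the path -/
def Tcols (n : ℕ) (g : List Step) : ℕ :=
  ((Finset.range n).image fun i => eBefore g i).card

/-- the `q`-integer `[k]_q = 1 + q + ⋯ + q^{k-1}` as a polynomial -/
noncomputable def qInt (k : ℕ) : Polynomial ℤ := ∑ i ∈ Finset.range k, Polynomial.X ^ i

/-- the `q`-factorial `[k]!_q` -/
noncomputable def qFact (k : ℕ) : Polynomial ℤ := ∏ i ∈ Finset.range k, qInt (i+1)

/-!
The orbit of `φ` on a word `γ ∈ {NE, D}*` is explicit. On `D γ'` it is `D` followed by the orbit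
of `γ'`. On `NE γ'` it first runs through the orbit of `γ'` behind the untouched prefix `NE`,
reaching the sorted word of `γ'` (its letters `N`, `D` in order, then its `E`s), and then moves
the leading `E` to the right past the `N`s and `D`s of `γ'`, one letter at a time. Each step
raises the area by one, the sorted word of `γ'` has area `bounce γ'`, and
`bounce (NE γ') = bounce γ' + #N γ' + #D γ'`; tracking the bounce path of the words in the second
phase shows that the bounce drops by one at each step, so `φ(γ)` has `(bounce, area) = (b - i, i)`
for `0 ≤ i ≤ b = bounce γ`.
-/

open List

theorem IsNED.cnt_N_eq_cnt_E {g : List Step} (h : IsNED g) : cnt N g = cnt E g := by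
  induction h <;> simp_all [cnt]

theorem length_eq_cnt_N_add_cnt_D {w : List Step} (hw : E ∉ w) :
    w.length = cnt N w + cnt D w := by
  induction w with
  | nil => rfl
  | cons x w ih => cases x <;> simp_all [cnt] <;> omega

def stripE (w : List Step) : List Step := w.filter (· ≠ E)

theorem E_notMem_stripE (w : List Step) : E ∉ stripE w := by
  simp [stripE]

theorem length_stripE (w : List Step) : (stripE w).length = cnt N w + cnt D w := by
  rw [length_eq_cnt_N_add_cnt_D (E_notMem_stripE w)]
  simp [stripE, cnt, List.count_filter]

section phiStep

theorem phiRevAux_E_cons (t : List Step) : phiRevAux (E :: t) = E :: phiRevAux t := by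
  rcases t with _ | ⟨_ | _ | _, t⟩ <;> simp [phiRevAux]

theorem phiRevAux_cons_of_head?_ne {l : List Step} (hl : l.head? ≠ some E) (b : Step) :
    phiRevAux (b :: l) = b :: phiRevAux l := by
  rcases l with _ | ⟨_ | _ | _, l⟩ <;> simp_all [phiRevAux]

theorem phiRevAux_perm (w : List Step) : phiRevAux w ~ w := by
  induction w using phiRevAux.induct with
  | case1 a t ha => simpa [phiRevAux, ha] using List.Perm.swap a E t
  | case2 a t ha ih => simpa [phiRevAux, ha] using ih.cons a
  | case3 a t ht ih => rw [phiRevAux_cons_of_head?_ne (by cases t <;> simp_all)]; exact ih.cons a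
  | case4 => rfl

theorem phiRevAux_append_singleton {a : Step} (ha : a ≠ E) (r : List Step) :
    phiRevAux (r ++ [a]) = phiRevAux r ++ [a] := by
  induction r using phiRevAux.induct with
  | case1 b t hb => simp [phiRevAux, hb]
  | case2 b t hb ih => simp_all [phiRevAux]
  | case3 b t ht ih =>
    have ht' : t.head? ≠ some E := by cases t <;> simp_all
    rw [List.cons_append, phiRevAux_cons_of_head?_ne, ih, phiRevAux_cons_of_head?_ne ht']
    · rfl
    · cases t <;> simp_all
  | case4 => rcases a with _ | _ | _ <;> simp_all [phiRevAux]

theorem phiRevAux_append_of_ne {r : List Step} (hr : phiRevAux r ≠ r) (s : List Step) :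
    phiRevAux (r ++ s) = phiRevAux r ++ s := by
  induction r using phiRevAux.induct with
  | case1 b t hb => simp [phiRevAux, hb]
  | case2 b t hb ih => simp_all [phiRevAux]
  | case3 b t ht ih =>
    have ht' : t.head? ≠ some E := by cases t <;> simp_all
    rw [phiRevAux_cons_of_head?_ne ht'] at hr
    have hne : phiRevAux t ≠ t := fun h => hr (by rw [h])
    have hnil : t ≠ [] := by rintro rfl; exact hne rfl
    rw [List.cons_append, phiRevAux_cons_of_head?_ne, ih hne, phiRevAux_cons_of_head?_ne ht']
    · rfl
    · cases t <;> simp_all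
  | case4 => exact absurd rfl hr

theorem phiRevAux_append_swap {m : List Step} (hm : E ∉ m) {a : Step} (ha : a ≠ E)
    (r : List Step) : phiRevAux (m ++ a :: E :: r) = m ++ E :: a :: r := by
  induction m with
  | nil => simp [phiRevAux, ha]
  | cons b m ih =>
    rw [List.cons_append, phiRevAux_cons_of_head?_ne, ih (by simp_all)]
    · rfl
    · cases m <;> grind

theorem phiRevAux_replicate_E_append (k : ℕ) (r : List Step) :
    phiRevAux (replicate k E ++ r) = replicate k E ++ phiRevAux r := by
  induction k with
  | zero => rfl
  | succ k ih => rw [replicate_succ, List.cons_append, phiRevAux_E_cons, ih]; rfl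

theorem phiStep_perm (w : List Step) : phiStep w ~ w := by
  simpa [phiStep] using phiRevAux_perm w.reverse

theorem iterate_phiStep_perm (i : ℕ) (w : List Step) : phiStep^[i] w ~ w := by
  induction i with
  | zero => rfl
  | succ i ih => rw [Function.iterate_succ_apply']; exact (phiStep_perm _).trans ih

theorem phiStep_D_cons (p : List Step) : phiStep (D :: p) = D :: phiStep p := by
  simp [phiStep, phiRevAux_append_singleton]

theorem phiStep_append_of_ne {p : List Step} (hp : phiStep p ≠ p) (s : List Step) :
    phiStep (s ++ p) = s ++ phiStep p := by
  have hr : phiRevAux p.reverse ≠ p.reverse := fun h => hp (by simp [phiStep, h])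
  simp [phiStep, phiRevAux_append_of_ne hr]

theorem phiStep_swap {C : List Step} (hC : E ∉ C) {x : Step} (hx : x ≠ E) (u : List Step)
    (k : ℕ) :
    phiStep (u ++ E :: x :: (C ++ replicate k E)) = u ++ x :: E :: (C ++ replicate k E) := by
  have hC' : E ∉ C.reverse := by simpa using hC
  have := phiRevAux_append_swap hC' hx u.reverse
  simp_all [phiStep, phiRevAux_replicate_E_append]

end phiStep

section area

theorem area_D_cons (p : List Step) : area (D :: p) = area p := by
  simp [area, areaAux]

theorem area_NE_cons (p : List Step) : area (N :: E :: p) = area p := by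
  simp [area, areaAux]

theorem areaAux_replicate_E (h k : ℕ) : areaAux h (replicate k E) = 0 := by
  induction k generalizing h with
  | zero => rfl
  | succ k ih => simp [replicate_succ, areaAux, ih]

theorem areaAux_append_of_E_notMem {A : List Step} (hA : E ∉ A) (h : ℕ) (r : List Step) :
    areaAux h (A ++ r) = areaAux h A + areaAux (h + cnt N A) r := by
  induction A generalizing h with
  | nil => simp [areaAux, cnt]
  | cons x A ih =>
    cases x <;> simp_all [areaAux, cnt] <;> ring_nf

theorem areaAux_succ_of_E_notMem {A : List Step} (hA : E ∉ A) (h : ℕ) :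
    areaAux (h + 1) A = areaAux h A + A.length := by
  induction A generalizing h with
  | nil => rfl
  | cons x A ih =>
    cases x <;> simp_all [areaAux] <;> omega

theorem area_append_replicate_E {l : List Step} (hl : E ∉ l) (k : ℕ) :
    area (l ++ replicate k E) = area l := by
  rw [area, areaAux_append_of_E_notMem hl, areaAux_replicate_E, add_zero, area]

/-- Moving the `E` of `N E l` past the first `j` letters of the `E`-free word `l` lifts each of
them by one unit. -/
theorem area_moveE {l : List Step} (hl : E ∉ l) {j : ℕ} (hj : j ≤ l.length) (k : ℕ) :
    area (N :: (l.take j ++ E :: (l.drop j ++ replicate k E))) = area l + j := by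
  have hA : E ∉ l.take j := fun h => hl (List.mem_of_mem_take h)
  have hB : E ∉ l.drop j := fun h => hl (List.mem_of_mem_drop h)
  conv_rhs => rw [area, ← List.take_append_drop j l, areaAux_append_of_E_notMem hA, zero_add]
  rw [area, areaAux, areaAux_append_of_E_notMem hA, areaAux, add_tsub_cancel_left,
    areaAux_append_of_E_notMem hB, areaAux_replicate_E, areaAux_succ_of_E_notMem hA,
    List.length_take_of_le hj]
  omega

end area

section bounce

/-- The corner index `j` strictly increases and stays below `nn`, so `nn - j` units of fuel
suffice. -/
theorem bounceAux_fuel_congr (g w : List Step) (nn : ℕ) {f₁ f₂ j : ℕ} (hj : j < nn)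
    (h₁ : nn - j ≤ f₁) (h₂ : nn - j ≤ f₂) :
    bounceAux g w nn f₁ j = bounceAux g w nn f₂ j := by
  induction f₁ generalizing f₂ j with
  | zero => omega
  | succ f ih =>
    obtain _ | f₂ := f₂
    · omega
    simp only [bounceAux]
    split_ifs with hc
    · rfl
    · rw [not_or, not_le, not_le] at hc
      rw [ih (f₂ := f₂) hc.1 (by omega) (by omega)]

theorem bounce_eq_bounceAux {p : List Step} (hp : cnt E p ≠ 0) {f : ℕ} (hf : cnt E p ≤ f) :
    bounce p = bounceAux p (p.filter (· ≠ D)) (cnt E p) f 0 := by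
  have hw : cnt E (p.filter (· ≠ D)) = cnt E p := by simp [cnt, List.count_filter]
  simp only [bounce, hw, if_neg hp]
  exact bounceAux_fuel_congr _ _ _ (Nat.pos_of_ne_zero hp) (List.count_le_length ..) (by omega)

theorem bounceAux_D_cons (p w : List Step) (nn f j : ℕ) :
    bounceAux (D :: p) w nn f j = bounceAux p w nn f j := by
  induction f generalizing j <;> simp_all [bounceAux, dAfterE]

theorem bounceAux_NE_cons (p w : List Step) (nn f j : ℕ) :
    bounceAux (N :: E :: p) (N :: E :: w) (nn + 1) f (j + 1) = bounceAux p w nn f j := by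
  induction f generalizing j with
  | zero => rfl
  | succ f ih =>
    simp only [bounceAux, dAfterE, nBefore]
    split_ifs <;> first | omega | simp_all [add_comm 1]

theorem bounce_of_cnt_E_eq_zero {p : List Step} (hp : cnt E p = 0) : bounce p = 0 := by
  simp_all [bounce, cnt, List.count_filter]

theorem bounce_D_cons (p : List Step) : bounce (D :: p) = bounce p := by
  have hp' : cnt E (D :: p) = cnt E p := by simp [cnt]
  by_cases hp : cnt E p = 0
  · rw [bounce_of_cnt_E_eq_zero hp, bounce_of_cnt_E_eq_zero (hp'.trans hp)]
  · rw [bounce_eq_bounceAux (by omega) (f := p.length) (by rw [hp']; exact List.count_le_length ..),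
      bounce_eq_bounceAux hp (f := p.length) (List.count_le_length ..), hp']
    simp [bounceAux_D_cons]

theorem bounce_NE_cons (p : List Step) : bounce (N :: E :: p) = cnt D p + cnt E p + bounce p := by
  have hp' : cnt E (N :: E :: p) = cnt E p + 1 := by simp [cnt]
  have hw : (N :: E :: p).filter (· ≠ D) = N :: E :: p.filter (· ≠ D) := by simp
  have hn : nBefore (N :: E :: p.filter (· ≠ D)) 0 = 1 := by simp [nBefore]
  have hd : dAfterE (N :: E :: p) 1 = cnt D p := by simp [dAfterE]
  rw [bounce_eq_bounceAux (by omega) (f := p.length + 1) (by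
    rw [hp']; exact Nat.succ_le_succ (List.count_le_length ..)), hp', hw, bounceAux, hn, hd]
  by_cases hp : cnt E p = 0
  · rw [if_pos (by omega), bounce_of_cnt_E_eq_zero hp]
    omega
  · have hshift := bounceAux_NE_cons p (p.filter (· ≠ D)) (cnt E p) p.length 0
    rw [zero_add] at hshift
    rw [if_neg (by omega), hshift, ← bounce_eq_bounceAux hp (List.count_le_length ..)]
    omega

theorem filter_ne_D_of_E_notMem {A : List Step} (hA : E ∉ A) :
    A.filter (· ≠ D) = replicate (cnt N A) N := by
  induction A with
  | nil => rfl
  | cons x A ih => cases x <;> simp_all [cnt, replicate_succ]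

theorem nBefore_replicate_N_append (m : ℕ) (w : List Step) (j : ℕ) :
    nBefore (replicate m N ++ w) j = m + nBefore w j := by
  induction m with
  | zero => simp
  | succ m ih => rw [replicate_succ, List.cons_append, nBefore, ih]; ring

theorem nBefore_replicate_E (k j : ℕ) : nBefore (replicate k E) j = 0 := by
  induction k generalizing j with
  | zero => rfl
  | succ k ih => cases j <;> simp [replicate_succ, nBefore, ih]

theorem dAfterE_append_of_E_notMem {A : List Step} (hA : E ∉ A) (p : List Step) (e : ℕ) :
    dAfterE (A ++ p) e = dAfterE p e := by
  induction A with
  | nil => rfl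
  | cons x A ih => cases x <;> simp_all [dAfterE]

theorem dAfterE_replicate_E (k e : ℕ) : dAfterE (replicate k E) e = 0 := by
  induction k generalizing e with
  | zero => rfl
  | succ k ih => by_cases he : e ≤ 1 <;> simp [replicate_succ, dAfterE, he, ih, cnt, List.count_replicate]

/-- The bounce path of the underlying Dyck path `N^(a+1) E N^b E^k` (with `a = #N A`, `b = #N B`)
returns to the diagonal once, contributing `b`, and the only diagonal steps above its peaks are
the `D`s of `B`. -/
theorem bounce_moveE {A B : List Step} (hA : E ∉ A) (hB : E ∉ B) {k : ℕ}
    (hk : cnt N A + cnt N B = k) :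
    bounce (N :: (A ++ E :: (B ++ replicate k E))) = B.length := by
  set g := N :: (A ++ E :: (B ++ replicate k E))
  have hE : cnt E g = k + 1 := by
    simp [g, cnt, List.count_eq_zero_of_not_mem hA, List.count_eq_zero_of_not_mem hB]
  have hw : g.filter (· ≠ D) = replicate (cnt N A + 1) N ++
      E :: (replicate (cnt N B) N ++ replicate k E) := by
    rw [filter_cons_of_pos (by decide), filter_append, filter_cons_of_pos (by decide),
      filter_append, filter_ne_D_of_E_notMem hA, filter_ne_D_of_E_notMem hB,
      filter_eq_self.2 (by simp [mem_replicate])]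
    simp [replicate_succ]
  have hd₁ : dAfterE g 1 = cnt D B := by
    simp [g, dAfterE, dAfterE_append_of_E_notMem hA, cnt, List.count_replicate]
  have hd₂ : dAfterE g (cnt N A + 1 + 1) = 0 := by
    simp [g, dAfterE, dAfterE_append_of_E_notMem hA, dAfterE_append_of_E_notMem hB,
      dAfterE_replicate_E]
  have hn₀ : nBefore (g.filter (· ≠ D)) 0 = cnt N A + 1 := by
    rw [hw, nBefore_replicate_N_append]
    simp [nBefore]
  have hn₁ : nBefore (g.filter (· ≠ D)) (cnt N A + 1) = k + 1 := by
    rw [hw, nBefore_replicate_N_append]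
    simp [nBefore, nBefore_replicate_N_append, nBefore_replicate_E]
    omega
  have hlen := length_eq_cnt_N_add_cnt_D hB
  rw [bounce_eq_bounceAux (by omega) (f := k + 1) hE.le, hE, bounceAux, hd₁, hn₀]
  by_cases hb : cnt N B = 0
  · rw [if_pos (by omega)]
    omega
  · obtain ⟨k', rfl⟩ : ∃ k', k = k' + 1 := ⟨k - 1, by omega⟩
    rw [if_neg (by omega), bounceAux, hd₂, hn₁, if_pos (by omega)]
    omega

end bounce

section orbit

theorem iterate_phiStep_D_cons (i : ℕ) (p : List Step) :
    phiStep^[i] (D :: p) = D :: phiStep^[i] p := by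
  induction i with
  | zero => rfl
  | succ i ih => rw [Function.iterate_succ_apply', ih, phiStep_D_cons, Function.iterate_succ_apply']

theorem iterate_phiStep_append {p : List Step} {m : ℕ}
    (harea : ∀ i ≤ m, area (phiStep^[i] p) = i) (s : List Step) :
    ∀ i ≤ m, phiStep^[i] (s ++ p) = s ++ phiStep^[i] p := by
  intro i
  induction i with
  | zero => intro; rfl
  | succ i ih =>
    intro hi
    have hmoves : phiStep (phiStep^[i] p) ≠ phiStep^[i] p := by
      intro hfix
      have := harea (i + 1) hi
      rw [Function.iterate_succ_apply', hfix, harea i (by omega)] at this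
      omega
    rw [Function.iterate_succ_apply', ih (by omega), phiStep_append_of_ne hmoves,
      Function.iterate_succ_apply']

theorem iterate_phiStep_NE_cons {t : List Step} {m : ℕ}
    (harea : ∀ i ≤ m, area (phiStep^[i] t) = i) :
    ∀ i ≤ m, phiStep^[i] (N :: E :: t) = N :: E :: phiStep^[i] t :=
  iterate_phiStep_append harea [N, E]

theorem iterate_phiStep_moveE {l : List Step} (hl : E ∉ l) (u : List Step) (k : ℕ) :
    ∀ j ≤ l.length, phiStep^[j] (u ++ E :: (l ++ replicate k E)) =
      u ++ (l.take j ++ E :: (l.drop j ++ replicate k E)) := by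
  intro j
  induction j with
  | zero => intro; rfl
  | succ j ih =>
    intro hj
    have hj' : j < l.length := hj
    have hC : E ∉ l.drop (j + 1) := fun h => hl (List.mem_of_mem_drop h)
    have hx : l[j] ≠ E := fun h => hl (h ▸ List.getElem_mem hj')
    rw [Function.iterate_succ_apply', ih hj'.le, List.drop_eq_getElem_cons hj',
      List.take_succ_eq_append_getElem hj']
    have := phiStep_swap hC hx (u ++ l.take j) k
    simp only [List.append_assoc, List.cons_append, List.nil_append] at this ⊢
    exact this

theorem iterate_phiStep_NE_cons_add {t : List Step} {m : ℕ}
    (harea : ∀ i ≤ m, area (phiStep^[i] t) = i)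
    (hsorted : phiStep^[m] t = stripE t ++ replicate (cnt E t) E)
    {j : ℕ} (hj : j ≤ (stripE t).length) :
    phiStep^[m + j] (N :: E :: t) =
      N :: ((stripE t).take j ++ E :: ((stripE t).drop j ++ replicate (cnt E t) E)) := by
  rw [add_comm, Function.iterate_add_apply, iterate_phiStep_NE_cons harea m le_rfl, hsorted]
  simpa using iterate_phiStep_moveE (E_notMem_stripE t) [N] (cnt E t) j hj

theorem IsNED.bounce_NE_cons {t : List Step} (ht : IsNED t) :
    bounce (N :: E :: t) = bounce t + (stripE t).length := by
  rw [_root_.bounce_NE_cons, length_stripE, ht.cnt_N_eq_cnt_E]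
  omega

theorem IsNED.iterate_phiStep_bounce_eq_and_area_iterate {g : List Step} (h : IsNED g) :
    phiStep^[bounce g] g = stripE g ++ replicate (cnt E g) E ∧
      ∀ i ≤ bounce g, area (phiStep^[i] g) = i := by
  induction h with
  | nil => simp [bounce_of_cnt_E_eq_zero (p := []) rfl, stripE, cnt, area, areaAux]
  | @d t ht ih =>
    rw [bounce_D_cons]
    refine ⟨?_, fun i hi => ?_⟩
    · rw [iterate_phiStep_D_cons, ih.1]
      simp [stripE, cnt]
    · rw [iterate_phiStep_D_cons, area_D_cons, ih.2 i hi]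
  | @ne t ht ih =>
    obtain ⟨hsorted, harea⟩ := ih
    have hl : area (stripE t) = bounce t := by
      rw [← area_append_replicate_E (E_notMem_stripE t) (cnt E t), ← hsorted, harea _ le_rfl]
    rw [ht.bounce_NE_cons]
    refine ⟨?_, fun i hi => ?_⟩
    · rw [iterate_phiStep_NE_cons_add harea hsorted le_rfl]
      simp [stripE, cnt, replicate_succ]
    · rcases le_or_gt i (bounce t) with hi' | hi'
      · rw [iterate_phiStep_NE_cons harea i hi', area_NE_cons, harea i hi']
      · obtain ⟨j, rfl⟩ := Nat.exists_eq_add_of_le hi'.le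
        rw [iterate_phiStep_NE_cons_add harea hsorted (by omega),
          area_moveE (E_notMem_stripE t) (by omega), hl]

theorem IsNED.bounce_iterate_phiStep {g : List Step} (h : IsNED g) :
    ∀ i ≤ bounce g, bounce (phiStep^[i] g) = bounce g - i := by
  induction h with
  | nil => simp [bounce_of_cnt_E_eq_zero (p := []) rfl]
  | @d t ht ih =>
    intro i hi
    rw [bounce_D_cons] at hi ⊢
    rw [iterate_phiStep_D_cons, bounce_D_cons, ih i hi]
  | @ne t ht ih =>
    obtain ⟨hsorted, harea⟩ := ht.iterate_phiStep_bounce_eq_and_area_iterate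
    intro i hi
    rcases le_or_gt i (bounce t) with hi' | hi'
    · have hD : cnt D (phiStep^[i] t) = cnt D t := (iterate_phiStep_perm i t).count_eq D
      have hE : cnt E (phiStep^[i] t) = cnt E t := (iterate_phiStep_perm i t).count_eq E
      rw [iterate_phiStep_NE_cons harea i hi', _root_.bounce_NE_cons, _root_.bounce_NE_cons,
        ih i hi', hD, hE]
      omega
    · obtain ⟨j, rfl⟩ := Nat.exists_eq_add_of_le hi'.le
      have hj : j ≤ (stripE t).length := by
        rw [ht.bounce_NE_cons] at hi
        omega
      have hA : E ∉ (stripE t).take j := fun h => E_notMem_stripE t (List.mem_of_mem_take h)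
      have hB : E ∉ (stripE t).drop j := fun h => E_notMem_stripE t (List.mem_of_mem_drop h)
      have hk : cnt N ((stripE t).take j) + cnt N ((stripE t).drop j) = cnt E t := by
        rw [cnt, cnt, ← List.count_append, List.take_append_drop, ← ht.cnt_N_eq_cnt_E]
        simp [stripE, cnt, List.count_filter]
      rw [iterate_phiStep_NE_cons_add harea hsorted hj, bounce_moveE hA hB hk, List.length_drop,
        ht.bounce_NE_cons]
      omega

end orbit

theorem stmt5_general {R : Type*} [CommRing R] (q t : R) (g : List Step) (h : IsNED g) :
    ((phiSeq g).map fun p => q ^ bounce p * t ^ area p).sum =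
      ∑ j ∈ Finset.range (bounce g + 1), q ^ (bounce g - j) * t ^ j := by
  rw [phiSeq, List.map_map, Finset.sum_eq_multiset_sum, Finset.range_val, Multiset.range,
    Multiset.map_coe, Multiset.sum_coe]
  congr 1
  refine List.map_congr_left fun i hi => ?_
  have hi : i ≤ bounce g := Nat.lt_succ_iff.mp (List.mem_range.mp hi)
  simp only [Function.comp_apply, h.bounce_iterate_phiStep i hi,
    (h.iterate_phiStep_bounce_eq_and_area_iterate).2 i hi]

/-- For any `γ ∈ {NE,D}^n`, the sum over the paths `γᵢ` of the sequence
`φ(γ)` of `q^{bounce(γᵢ)} t^{area(γᵢ)}` equals the Schur polynomial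
`s_{(b)}(q,t) = q^b + q^{b-1}t + ⋯ + t^b`, where `b = bounce(γ)`. -/
theorem stmt5 {R : Type*} [CommRing R] (q t : R) (n : ℕ) (g : List Step)
    (h : IsNED g) (hn : cnt Step.N g + cnt Step.D g = n) :
    ((phiSeq g).map fun p => q ^ bounce p * t ^ area p).sum =
      ∑ j ∈ Finset.range (bounce g + 1), q ^ (bounce g - j) * t ^ j :=
  stmt5_general q t g h
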